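/- arXiv:1105.1124 — 3 statements merged into one kernel-verified Lean document; each statement's English description precedes it below -/
import Mathlib

section
/- For convex bodies K₁, …, Kₙ of class C²₊ in ℝⁿ and α ∉ {0,1}, with p = n·α/(1-α), one has D_α(P_{K₁} × ⋯ × P_{Kₙ} ‖ Q_{K₁} × ⋯ × Q_{Kₙ}) = (1/(α-1)) · log( as_p(K₁,…,Kₙ) / (n ∏_{i=1}^n |K_i|^{(1-α)/n} |K_i°|^{α/n}) ), where as_p(K₁,…,Kₙ) = ∫_{S^{n-1}} [h_{K₁}(u)^{1-p} f_{K₁}(u) ⋯ h_{Kₙ}(u)^{1-p} f_{Kₙ}(u)]^{1/(n+p)} dσ(u). -/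
open MeasureTheory Real
open scoped RealInnerProductSpace

/-- A convex body of class `C²₊`. -/
def IsC2PlusBody (n : ℕ) (K : Set (EuclideanSpace ℝ (Fin n))) : Prop :=
  IsCompact K ∧ Convex ℝ K ∧ 0 ∈ interior K ∧
    ∃ N : EuclideanSpace ℝ (Fin n) → EuclideanSpace ℝ (Fin n),
      ContDiffOn ℝ 1 N (frontier K) ∧
      (∀ x ∈ frontier K, ‖N x‖ = 1 ∧ ∀ y ∈ K, ⟪y, N x⟫ ≤ ⟪x, N x⟫) ∧
      Set.InjOn N (frontier K)

/-! On the sphere the Hellinger integrand `p_{K₁}^α q_{K₁}^{1-α} ⋯ p_{Kₙ}^α q_{Kₙ}^{1-α}` equals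
`(∏ᵢ h_{Kᵢ}^{1-p} f_{Kᵢ})^{(1-α)/n}` divided by the constant `n ∏ᵢ |Kᵢ|^{(1-α)/n} |Kᵢ°|^{α/n}`:
the factors `n^{1/n}` multiply to `n`, the powers of `h_{Kᵢ}` combine because `p(1-α) = nα`,
and `1/(n+p) = (1-α)/n`. The constant then leaves the integral. The rpow manipulations need
`|Kᵢ|, |Kᵢ°| > 0`, which holds as `Kᵢ` is bounded with `0` in its interior, and hence so is
`Kᵢ°`. -/

section InnerPolar

variable {E : Type*} [NormedAddCommGroup E] [InnerProductSpace ℝ E]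

def innerPolar (K : Set E) : Set E := {y | ∀ x ∈ K, ⟪x, y⟫ ≤ 1}

lemma closedBall_inv_subset_innerPolar {K : Set E} {R : ℝ} (hR : 0 < R)
    (hK : K ⊆ Metric.closedBall 0 R) : Metric.closedBall 0 R⁻¹ ⊆ innerPolar K := by
  intro y hy x hx
  calc ⟪x, y⟫ ≤ ‖x‖ * ‖y‖ := real_inner_le_norm x y
    _ ≤ R * R⁻¹ := mul_le_mul (mem_closedBall_zero_iff.mp (hK hx))
        (mem_closedBall_zero_iff.mp hy) (norm_nonneg _) hR.le
    _ = 1 := mul_inv_cancel₀ hR.ne'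

lemma innerPolar_subset_closedBall_inv {K : Set E} {r : ℝ} (hr : 0 < r)
    (hK : Metric.closedBall 0 r ⊆ K) : innerPolar K ⊆ Metric.closedBall 0 r⁻¹ := by
  intro y hy
  rw [mem_closedBall_zero_iff]
  rcases eq_or_ne y 0 with rfl | hy0
  · simpa using hr.le
  have hny : 0 < ‖y‖ := norm_pos_iff.mpr hy0
  -- test `y` against the point of the sphere of radius `r` in its own direction
  have hxK : (r / ‖y‖) • y ∈ K := hK <| by
    rw [mem_closedBall_zero_iff, norm_smul, norm_div, norm_norm, Real.norm_of_nonneg hr.le,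
      div_mul_cancel₀ _ hny.ne']
  have hle : r * ‖y‖ ≤ 1 := by
    have := hy _ hxK
    rw [real_inner_smul_left, real_inner_self_eq_norm_sq] at this
    calc r * ‖y‖ = r / ‖y‖ * ‖y‖ ^ 2 := by field_simp
      _ ≤ 1 := this
  rwa [← mul_one r⁻¹, le_inv_mul_iff₀ hr]

lemma isBounded_innerPolar {K : Set E} (hK : (0 : E) ∈ interior K) :
    Bornology.IsBounded (innerPolar K) := by
  obtain ⟨r, hr, hrK⟩ :=
    Metric.nhds_basis_closedBall.mem_iff.mp (mem_interior_iff_mem_nhds.mp hK)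
  exact Metric.isBounded_closedBall.subset (innerPolar_subset_closedBall_inv hr hrK)

lemma zero_mem_interior_innerPolar {K : Set E} (hK : Bornology.IsBounded K) :
    (0 : E) ∈ interior (innerPolar K) := by
  obtain ⟨R, hR, hKR⟩ := hK.subset_closedBall_lt 0 0
  exact interior_mono (closedBall_inv_subset_innerPolar hR hKR)
    (mem_interior_iff_mem_nhds.mpr (Metric.closedBall_mem_nhds 0 (inv_pos.mpr hR)))

end InnerPolar

lemma measure_toReal_pos_of_isBounded {X : Type*} [PseudoMetricSpace X] [ProperSpace X]
    [MeasurableSpace X] (μ : Measure X) [μ.IsOpenPosMeasure] [IsFiniteMeasureOnCompacts μ]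
    {s : Set X} (hs : Bornology.IsBounded s) (hi : (interior s).Nonempty) :
    0 < (μ s).toReal :=
  ENNReal.toReal_pos (Measure.measure_pos_of_nonempty_interior μ hi).ne' hs.measure_lt_top.ne

lemma volume_toReal_pos_of_isC2PlusBody {n : ℕ} {K : Set (EuclideanSpace ℝ (Fin n))}
    (hK : IsC2PlusBody n K) : 0 < (volume K).toReal :=
  measure_toReal_pos_of_isBounded volume hK.1.isBounded ⟨0, hK.2.2.1⟩

lemma volume_innerPolar_toReal_pos_of_isC2PlusBody {n : ℕ}
    {K : Set (EuclideanSpace ℝ (Fin n))} (hK : IsC2PlusBody n K) :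
    0 < (volume (innerPolar K)).toReal :=
  measure_toReal_pos_of_isBounded volume (isBounded_innerPolar hK.2.2.1)
    ⟨0, zero_mem_interior_innerPolar hK.1.isBounded⟩

section ConeDensities

variable {m α p c a v w : ℝ}

lemma rpow_mul_rpow_one_sub_of_pos (hm : m ≠ 0) (hα : α ≠ 1) (hp : p = m * α / (1 - α))
    (hc : 0 < c) (ha : 0 < a) (hv : 0 < v) (hw : 0 < w) :
    (1 / (c * w ^ (1 / m) * a)) ^ α * (a ^ (1 / m) / (c * v ^ (1 / m))) ^ (1 - α)
      = (a ^ (1 - p)) ^ ((1 - α) / m) / (c * (v ^ ((1 - α) / m) * w ^ (α / m))) := by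
  have h1α : 1 - α ≠ 0 := sub_ne_zero.mpr hα.symm
  rw [← exp_log ha, ← exp_log hc, ← exp_log hv, ← exp_log hw]
  simp only [← exp_mul, ← exp_add, ← exp_sub, one_div, ← exp_neg, exp_eq_exp]
  subst hp
  field_simp
  ring

lemma rpow_mul_rpow_one_sub (hm : m ≠ 0) (hα : α ≠ 1) (hp : p = m * α / (1 - α))
    (hc : 0 < c) (ha : 0 < a) {b : ℝ} (hb : 0 ≤ b) (hv : 0 < v) (hw : 0 < w) :
    (1 / (c * w ^ (1 / m) * a)) ^ α * (b ^ (1 / m) * a ^ (1 / m) / (c * v ^ (1 / m))) ^ (1 - α)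
      = (a ^ (1 - p) * b) ^ ((1 - α) / m) / (c * (v ^ ((1 - α) / m) * w ^ (α / m))) := by
  rw [mul_div_assoc, mul_rpow (rpow_nonneg hb _) (by positivity), ← rpow_mul hb,
    one_div_mul_eq_div, mul_rpow (rpow_nonneg ha.le _) hb, mul_div_right_comm,
    ← rpow_mul_rpow_one_sub_of_pos hm hα hp hc ha hv hw]
  ring

end ConeDensities

lemma prod_rpow_inv_natCast_self {n : ℕ} (hn : n ≠ 0) :
    ∏ _i : Fin n, (n : ℝ) ^ ((1 : ℝ) / n) = n := by
  rw [Finset.prod_const, Finset.card_univ, Fintype.card_fin, one_div,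
    rpow_inv_natCast_pow n.cast_nonneg hn]

lemma prod_rpow_mul_rpow_one_sub {n : ℕ} (hn : n ≠ 0) {α p : ℝ} (hα : α ≠ 1)
    (hp : p = n * α / (1 - α)) {a b v w : Fin n → ℝ} (ha : ∀ i, 0 < a i) (hb : ∀ i, 0 ≤ b i)
    (hv : ∀ i, 0 < v i) (hw : ∀ i, 0 < w i) :
    ∏ i, ((1 / ((n : ℝ) ^ ((1 : ℝ) / n) * w i ^ ((1 : ℝ) / n) * a i)) ^ α *
        (b i ^ ((1 : ℝ) / n) * a i ^ ((1 : ℝ) / n) /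
          ((n : ℝ) ^ ((1 : ℝ) / n) * v i ^ ((1 : ℝ) / n))) ^ (1 - α))
      = (∏ i, a i ^ (1 - p) * b i) ^ ((1 - α) / n) /
          (n * ∏ i, v i ^ ((1 - α) / n) * w i ^ (α / n)) := by
  have hn' : (0 : ℝ) < n := Nat.cast_pos.mpr (Nat.pos_of_ne_zero hn)
  simp_rw [rpow_mul_rpow_one_sub hn'.ne' hα hp (rpow_pos_of_pos hn' _) (ha _) (hb _) (hv _)
    (hw _)]
  rw [Finset.prod_div_distrib, Finset.prod_mul_distrib, prod_rpow_inv_natCast_self hn,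
    finsetProd_rpow _ _ fun i _ => mul_nonneg (rpow_nonneg (ha i).le _) (hb i)]

theorem renyi_eq_mixed_p_affine_general {n : ℕ} (hn : 1 ≤ n)
    (K : Fin n → Set (EuclideanSpace ℝ (Fin n)))
    (hK : ∀ i, IsC2PlusBody n (K i))
    -- support functions and curvature functions of the bodies
    (h f : Fin n → EuclideanSpace ℝ (Fin n) → ℝ)
    (hh : ∀ i, ∀ u ∈ Metric.sphere (0 : EuclideanSpace ℝ (Fin n)) 1, 0 < h i u)
    (hf : ∀ i, ∀ u ∈ Metric.sphere (0 : EuclideanSpace ℝ (Fin n)) 1, 0 ≤ f i u)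
    (VK VKp : Fin n → ℝ) (hVK : ∀ i, VK i = (volume (K i)).toReal)
    (hVKp : ∀ i, VKp i =
      (volume {y : EuclideanSpace ℝ (Fin n) | ∀ x ∈ K i, ⟪x, y⟫ ≤ 1}).toReal)
    (α : ℝ) (hα1 : α ≠ 1) (p : ℝ) (hp : p = n * α / (1 - α)) :
    (1 / (α - 1)) * Real.log (∫ u in Metric.sphere (0 : EuclideanSpace ℝ (Fin n)) 1,
        ∏ i, ((1 / ((n : ℝ) ^ ((1 : ℝ) / n) * VKp i ^ ((1 : ℝ) / n) * h i u)) ^ α *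
          (f i u ^ ((1 : ℝ) / n) * h i u ^ ((1 : ℝ) / n) /
            ((n : ℝ) ^ ((1 : ℝ) / n) * VK i ^ ((1 : ℝ) / n))) ^ (1 - α)) ∂μH[(n : ℝ) - 1])
      = (1 / (α - 1)) *
        Real.log ((∫ u in Metric.sphere (0 : EuclideanSpace ℝ (Fin n)) 1,
            (∏ i, h i u ^ (1 - p) * f i u) ^ (1 / ((n : ℝ) + p)) ∂μH[(n : ℝ) - 1]) /
          (n * ∏ i, VK i ^ ((1 - α) / n) * VKp i ^ (α / n))) := by
  have hn0 : n ≠ 0 := Nat.one_le_iff_ne_zero.mp hn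
  have hVK_pos i : 0 < VK i := hVK i ▸ volume_toReal_pos_of_isC2PlusBody (hK i)
  have hVKp_pos i : 0 < VKp i := hVKp i ▸ volume_innerPolar_toReal_pos_of_isC2PlusBody (hK i)
  have hexp : 1 / ((n : ℝ) + p) = (1 - α) / n := by
    have : (1 : ℝ) - α ≠ 0 := sub_ne_zero.mpr hα1.symm
    rw [hp]
    field_simp
    ring
  rw [hexp, setIntegral_congr_fun Metric.isClosed_sphere.measurableSet fun u hu =>
    prod_rpow_mul_rpow_one_sub hn0 hα1 hp (fun i => hh i u hu) (fun i => hf i u hu) hVK_pos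
      hVKp_pos, integral_div]

/-- Identification of the Rényi divergence of product cone measures with the mixed
`p`-affine surface area, `p = nα/(1-α)`:
`D_α(P_{K₁}×⋯×P_{Kₙ}‖Q_{K₁}×⋯×Q_{Kₙ})
  = (1/(α-1)) log( as_p(K₁,…,Kₙ) / (n ∏ᵢ |Kᵢ|^{(1-α)/n} |Kᵢ°|^{α/n}) )`. -/
theorem renyi_eq_mixed_p_affine {n : ℕ} (hn : 1 ≤ n)
    (K : Fin n → Set (EuclideanSpace ℝ (Fin n)))
    (hK : ∀ i, IsC2PlusBody n (K i))
    -- support functions and curvature functions of the bodies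
    (h f : Fin n → EuclideanSpace ℝ (Fin n) → ℝ)
    (hh : ∀ i, ∀ u ∈ Metric.sphere (0 : EuclideanSpace ℝ (Fin n)) 1, 0 < h i u)
    (hf : ∀ i, ∀ u ∈ Metric.sphere (0 : EuclideanSpace ℝ (Fin n)) 1, 0 ≤ f i u)
    (VK VKp : Fin n → ℝ) (hVK : ∀ i, VK i = (volume (K i)).toReal)
    (hVKp : ∀ i, VKp i =
      (volume {y : EuclideanSpace ℝ (Fin n) | ∀ x ∈ K i, ⟪x, y⟫ ≤ 1}).toReal)
    (α : ℝ) (hα0 : α ≠ 0) (hα1 : α ≠ 1) (p : ℝ) (hp : p = n * α / (1 - α)) :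
    (1 / (α - 1)) * Real.log (∫ u in Metric.sphere (0 : EuclideanSpace ℝ (Fin n)) 1,
        ∏ i, ((1 / ((n : ℝ) ^ ((1 : ℝ) / n) * VKp i ^ ((1 : ℝ) / n) * h i u)) ^ α *
          (f i u ^ ((1 : ℝ) / n) * h i u ^ ((1 : ℝ) / n) /
            ((n : ℝ) ^ ((1 : ℝ) / n) * VK i ^ ((1 : ℝ) / n))) ^ (1 - α)) ∂μH[(n : ℝ) - 1])
      = (1 / (α - 1)) *
        Real.log ((∫ u in Metric.sphere (0 : EuclideanSpace ℝ (Fin n)) 1,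
            (∏ i, h i u ^ (1 - p) * f i u) ^ (1 / ((n : ℝ) + p)) ∂μH[(n : ℝ) - 1]) /
          (n * ∏ i, VK i ^ ((1 - α) / n) * VKp i ^ (α / n))) :=
  renyi_eq_mixed_p_affine_general hn K hK h f hh hf VK VKp hVK hVKp α hα1 p hp
end

section
/- For a convex body K of class C²₊ in ℝⁿ, D_{1/2}(Q_K‖P_K) = D_{1/2}(P_K‖Q_K) = -2 log( as_n(K) / (n |K|^{1/2} |K°|^{1/2}) ), where as_n(K) = ∫_{∂K} κ_K(x)^{1/2} ⟨x,N_K(x)⟩^{-n(n-1)/(2n)} dμ_K(x). -/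
open MeasureTheory Real
open scoped RealInnerProductSpace

/-- Pointwise identity between the Bhattacharyya integrand and the
affine-surface-area integrand. -/
theorem bhatt_pointwise (nn t a B C : ℝ) (hnn : 0 < nn) (ht : 0 < t) (ha : 0 ≤ a)
    (hB : 0 ≤ B) (hC : 0 ≤ C) :
    (t / (nn * B)) ^ ((1:ℝ)/2) * (a / (t ^ nn * (nn * C))) ^ (1 - (1:ℝ)/2)
    = (nn * B ^ ((1:ℝ)/2) * C ^ ((1:ℝ)/2))⁻¹ *
      (a ^ (nn / (2 * nn)) * t ^ (-(nn * (nn - 1) / (2 * nn)))) := by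
  have h1 : (1:ℝ) - 1/2 = 1/2 := by norm_num
  have he1 : nn / (2 * nn) = 1/2 := by field_simp
  have he2 : -(nn * (nn - 1) / (2 * nn)) = 1/2 - nn * ((1:ℝ)/2) := by field_simp; ring
  have hnn2 : nn ^ ((1:ℝ)/2) * nn ^ ((1:ℝ)/2) = nn := by
    rw [← Real.rpow_add hnn]; norm_num
  rw [show (nn * B ^ ((1:ℝ)/2) * C ^ ((1:ℝ)/2))⁻¹
      = ((nn ^ ((1:ℝ)/2) * nn ^ ((1:ℝ)/2)) * B ^ ((1:ℝ)/2) * C ^ ((1:ℝ)/2))⁻¹ from by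
    rw [hnn2]]
  rw [h1, he1, he2, Real.div_rpow ht.le (by positivity), Real.div_rpow ha (by positivity),
    Real.mul_rpow hnn.le hB, Real.mul_rpow (by positivity) (by positivity),
    Real.mul_rpow hnn.le hC, Real.rpow_sub ht, ← Real.rpow_mul ht.le]
  ring

/-- `D_{1/2}(Q_K‖P_K) = D_{1/2}(P_K‖Q_K) = -2 log( as_n(K) / (n|K|^{1/2}|K°|^{1/2}) )`,
the middle expression involving the Bhattacharyya coefficient of `p_K, q_K`. -/
theorem renyi_half_eq_as_n {n : ℕ} (hn : 1 ≤ n)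
    (K : Set (EuclideanSpace ℝ (Fin n))) (hK : IsC2PlusBody n K)
    (N : EuclideanSpace ℝ (Fin n) → EuclideanSpace ℝ (Fin n))
    (hN : ∀ x ∈ frontier K, ‖N x‖ = 1 ∧ ∀ y ∈ K, ⟪y, N x⟫ ≤ ⟪x, N x⟫)
    (κ : EuclideanSpace ℝ (Fin n) → ℝ)
    (hκ : ∀ x ∈ frontier K, 0 ≤ κ x ∧ 0 < ⟪x, N x⟫)
    (VK VKp : ℝ) (hVK : VK = (volume K).toReal)
    (hVKp : VKp =
      (volume {y : EuclideanSpace ℝ (Fin n) | ∀ x ∈ K, ⟪x, y⟫ ≤ 1}).toReal)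
    (pK qK : EuclideanSpace ℝ (Fin n) → ℝ)
    (hpK : ∀ x, pK x = κ x / (⟪x, N x⟫ ^ (n : ℝ) * (n * VKp)))
    (hqK : ∀ x, qK x = ⟪x, N x⟫ / (n * VK)) :
    (1 / ((1 / 2 : ℝ) - 1)) * Real.log (∫ x in frontier K,
        qK x ^ ((1 : ℝ) / 2) * pK x ^ (1 - (1 : ℝ) / 2) ∂μH[(n : ℝ) - 1])
      = (1 / ((1 / 2 : ℝ) - 1)) * Real.log (∫ x in frontier K,
        pK x ^ ((1 : ℝ) / 2) * qK x ^ (1 - (1 : ℝ) / 2) ∂μH[(n : ℝ) - 1])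
    ∧ (1 / ((1 / 2 : ℝ) - 1)) * Real.log (∫ x in frontier K,
        qK x ^ ((1 : ℝ) / 2) * pK x ^ (1 - (1 : ℝ) / 2) ∂μH[(n : ℝ) - 1])
      = -2 * Real.log ((∫ x in frontier K,
          κ x ^ ((n : ℝ) / (2 * n)) *
            ⟪x, N x⟫ ^ (-((n : ℝ) * ((n : ℝ) - 1) / (2 * n))) ∂μH[(n : ℝ) - 1]) /
        (n * VK ^ ((1 : ℝ) / 2) * VKp ^ ((1 : ℝ) / 2))) := by
  have hnn : (0:ℝ) < (n:ℝ) := by exact_mod_cast Nat.lt_of_lt_of_le Nat.zero_lt_one hn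
  have hB : (0:ℝ) ≤ VK := hVK ▸ ENNReal.toReal_nonneg
  have hC : (0:ℝ) ≤ VKp := hVKp ▸ ENNReal.toReal_nonneg
  have hcomm : ∀ x : EuclideanSpace ℝ (Fin n),
      qK x ^ ((1 : ℝ) / 2) * pK x ^ (1 - (1 : ℝ) / 2)
        = pK x ^ ((1 : ℝ) / 2) * qK x ^ (1 - (1 : ℝ) / 2) := by
    intro x
    rw [show (1:ℝ) - 1/2 = 1/2 by norm_num]
    ring
  have hmain : (∫ x in frontier K,
      qK x ^ ((1 : ℝ) / 2) * pK x ^ (1 - (1 : ℝ) / 2) ∂μH[(n : ℝ) - 1])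
      = (∫ x in frontier K,
          κ x ^ ((n : ℝ) / (2 * n)) *
            ⟪x, N x⟫ ^ (-((n : ℝ) * ((n : ℝ) - 1) / (2 * n))) ∂μH[(n : ℝ) - 1]) /
        (n * VK ^ ((1 : ℝ) / 2) * VKp ^ ((1 : ℝ) / 2)) := by
    have h1 : (∫ x in frontier K,
        qK x ^ ((1 : ℝ) / 2) * pK x ^ (1 - (1 : ℝ) / 2) ∂μH[(n : ℝ) - 1])
        = ∫ x in frontier K,
            ((n:ℝ) * VK ^ ((1:ℝ)/2) * VKp ^ ((1:ℝ)/2))⁻¹ *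
            (κ x ^ ((n : ℝ) / (2 * n)) *
              ⟪x, N x⟫ ^ (-((n : ℝ) * ((n : ℝ) - 1) / (2 * n)))) ∂μH[(n : ℝ) - 1] := by
      refine setIntegral_congr_fun isClosed_frontier.measurableSet ?_
      intro x hx
      obtain ⟨hκx, htx⟩ := hκ x hx
      simp only [hqK, hpK]
      exact bhatt_pointwise (n:ℝ) _ _ _ _ hnn htx hκx hB hC
    rw [h1, integral_const_mul, inv_mul_eq_div]
  refine ⟨?_, ?_⟩
  · simp only [hcomm]
  · rw [hmain]
    norm_num
end

section
/- Jointly convex inequality for Lp-affine surface areas: let K and L be convex bodies of class C²₊ in ℝⁿ, 0 < p < ∞, and 0 < λ < 1. Then ∫_{S^{n-1}} [λ f_K h_K/|K| + (1-λ) f_L h_L/|L|]^{n/(n+p)} · [λ/(h_Kⁿ|K°|) + (1-λ)/(h_Lⁿ|L°|)]^{p/(n+p)} dσ ≥ ( as_p(K)/(|K|^{n/(n+p)}|K°|^{p/(n+p)}) )^λ · ( as_p(L)/(|L|^{n/(n+p)}|L°|^{p/(n+p)}) )^{1-λ}. -/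
open MeasureTheory Real
open scoped RealInnerProductSpace

lemma young_aux {α β a b A B : ℝ} (hα : 0 ≤ α) (hβ : 0 ≤ β) (hαβ : α + β = 1)
    (ha : 0 ≤ a) (hb : 0 ≤ b) (hA : 0 < A) (hB : 0 < B) :
    a ^ α * b ^ β ≤ (α * (a / A) + β * (b / B)) * (A ^ α * B ^ β) := by
  have h := Real.geom_mean_le_arith_mean2_weighted hα hβ (div_nonneg ha hA.le)
    (div_nonneg hb hB.le) hαβ
  rw [Real.div_rpow ha hA.le, Real.div_rpow hb hB.le] at h
  have hA' : 0 < A ^ α := Real.rpow_pos_of_pos hA α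
  have hB' : 0 < B ^ β := Real.rpow_pos_of_pos hB β
  calc a ^ α * b ^ β = (a ^ α / A ^ α * (b ^ β / B ^ β)) * (A ^ α * B ^ β) := by
        field_simp
    _ ≤ (α * (a / A) + β * (b / B)) * (A ^ α * B ^ β) := by
        apply mul_le_mul_of_nonneg_right h (by positivity)

lemma geom2_concave {α β lam a₁ a₂ b₁ b₂ : ℝ} (hα : 0 < α) (hβ : 0 < β) (hαβ : α + β = 1)
    (hl0 : 0 < lam) (hl1 : lam < 1) (ha₁ : 0 ≤ a₁) (ha₂ : 0 ≤ a₂) (hb₁ : 0 < b₁) (hb₂ : 0 < b₂) :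
    lam * (a₁ ^ α * b₁ ^ β) + (1 - lam) * (a₂ ^ α * b₂ ^ β) ≤
      (lam * a₁ + (1 - lam) * a₂) ^ α * (lam * b₁ + (1 - lam) * b₂) ^ β := by
  set A := lam * a₁ + (1 - lam) * a₂ with hA
  set B := lam * b₁ + (1 - lam) * b₂ with hB
  have hl1' : 0 < 1 - lam := by linarith
  have hBpos : 0 < B := by positivity
  have hAnn : 0 ≤ A := by positivity
  rcases eq_or_lt_of_le hAnn with hA0 | hApos
  · have h1 : a₁ = 0 := by nlinarith [mul_nonneg hl0.le ha₁, mul_nonneg hl1'.le ha₂]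
    have h2 : a₂ = 0 := by nlinarith [mul_nonneg hl0.le ha₁, mul_nonneg hl1'.le ha₂]
    rw [h1, h2, ← hA0, Real.zero_rpow hα.ne']
    ring_nf
    simp
  · have k1 := young_aux hα.le hβ.le hαβ ha₁ hb₁.le hApos hBpos
    have k2 := young_aux hα.le hβ.le hαβ ha₂ hb₂.le hApos hBpos
    have key : lam * (α * (a₁ / A) + β * (b₁ / B)) + (1 - lam) * (α * (a₂ / A) + β * (b₂ / B)) = 1 := by
      field_simp
      linear_combination (α * B) * hA.symm + (β * A) * hB.symm + (A * B) * hαβ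
    calc lam * (a₁ ^ α * b₁ ^ β) + (1 - lam) * (a₂ ^ α * b₂ ^ β)
        ≤ lam * ((α * (a₁ / A) + β * (b₁ / B)) * (A ^ α * B ^ β))
          + (1 - lam) * ((α * (a₂ / A) + β * (b₂ / B)) * (A ^ α * B ^ β)) := by
          exact add_le_add (mul_le_mul_of_nonneg_left k1 hl0.le)
            (mul_le_mul_of_nonneg_left k2 hl1'.le)
      _ = (lam * (α * (a₁ / A) + β * (b₁ / B)) + (1 - lam) * (α * (a₂ / A) + β * (b₂ / B)))
            * (A ^ α * B ^ β) := by ring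
      _ = A ^ α * B ^ β := by rw [key, one_mul]

lemma F_eq {f h V W α β γ nr : ℝ} (hf : 0 ≤ f) (hh : 0 < h) (hV : 0 < V) (hW : 0 < W)
    (hγ : γ = α - nr * β) :
    (f * h / V) ^ α * (1 / (h ^ nr * W)) ^ β = f ^ α * h ^ γ / (V ^ α * W ^ β) := by
  have e1 : (f * h / V) ^ α = f ^ α * h ^ α / V ^ α := by
    rw [Real.div_rpow (by positivity) hV.le, Real.mul_rpow hf hh.le]
  have e2 : (1 / (h ^ nr * W)) ^ β = 1 / (h ^ (nr * β) * W ^ β) := by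
    rw [Real.div_rpow zero_le_one (by positivity), Real.one_rpow,
      Real.mul_rpow (by positivity) hW.le, ← Real.rpow_mul hh.le]
  rw [e1, e2, hγ, Real.rpow_sub hh]
  have h1 : (0:ℝ) < h ^ (nr * β) := Real.rpow_pos_of_pos hh _
  have h2 : (0:ℝ) < V ^ α := Real.rpow_pos_of_pos hV _
  have h3 : (0:ℝ) < W ^ β := Real.rpow_pos_of_pos hW _
  rw [mul_one_div, div_div, div_eq_div_iff (by positivity) (by positivity)]
  field_simp

/-- Joint-convexity inequality for normalized `L_p`-affine surface areas:
for convex bodies `K, L` of class `C²₊`, `0 < p < ∞` and `0 < λ < 1`,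
`∫ [λ f_K h_K/|K| + (1-λ) f_L h_L/|L|]^{n/(n+p)} [λ/(h_Kⁿ|K°|) + (1-λ)/(h_Lⁿ|L°|)]^{p/(n+p)} dσ
  ≥ (as_p(K)/(|K|^{n/(n+p)}|K°|^{p/(n+p)}))^λ (as_p(L)/(|L|^{n/(n+p)}|L°|^{p/(n+p)}))^{1-λ}`. -/
theorem Lp_affine_jointly_convex {n : ℕ} (hn : 1 ≤ n)
    (K L : Set (EuclideanSpace ℝ (Fin n)))
    (hK : IsC2PlusBody n K) (hL : IsC2PlusBody n L)
    (fK hKs fL hLs : EuclideanSpace ℝ (Fin n) → ℝ)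
    (hposK : ∀ u ∈ Metric.sphere (0 : EuclideanSpace ℝ (Fin n)) 1, 0 < hKs u ∧ 0 ≤ fK u)
    (hposL : ∀ u ∈ Metric.sphere (0 : EuclideanSpace ℝ (Fin n)) 1, 0 < hLs u ∧ 0 ≤ fL u)
    (VK VKp VL VLp : ℝ) (hVK : VK = (volume K).toReal) (hVL : VL = (volume L).toReal)
    (hVKp : VKp = (volume {y : EuclideanSpace ℝ (Fin n) | ∀ x ∈ K, ⟪x, y⟫ ≤ 1}).toReal)
    (hVLp : VLp = (volume {y : EuclideanSpace ℝ (Fin n) | ∀ x ∈ L, ⟪x, y⟫ ≤ 1}).toReal)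
    (p : ℝ) (hp : 0 < p) (lam : ℝ) (hlam0 : 0 < lam) (hlam1 : lam < 1)
    (hint : IntegrableOn (fun u =>
      (lam * (fK u * hKs u / VK) + (1 - lam) * (fL u * hLs u / VL)) ^ ((n : ℝ) / (n + p)) *
        (lam / (hKs u ^ (n : ℝ) * VKp) + (1 - lam) / (hLs u ^ (n : ℝ) * VLp)) ^ (p / ((n : ℝ) + p)))
      (Metric.sphere (0 : EuclideanSpace ℝ (Fin n)) 1) μH[(n : ℝ) - 1])
    (hintK : IntegrableOn (fun u =>
      fK u ^ ((n : ℝ) / (n + p)) * hKs u ^ (-(n : ℝ) * (p - 1) / ((n : ℝ) + p)))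
      (Metric.sphere (0 : EuclideanSpace ℝ (Fin n)) 1) μH[(n : ℝ) - 1])
    (hintL : IntegrableOn (fun u =>
      fL u ^ ((n : ℝ) / (n + p)) * hLs u ^ (-(n : ℝ) * (p - 1) / ((n : ℝ) + p)))
      (Metric.sphere (0 : EuclideanSpace ℝ (Fin n)) 1) μH[(n : ℝ) - 1]) :
    (∫ u in Metric.sphere (0 : EuclideanSpace ℝ (Fin n)) 1,
        (lam * (fK u * hKs u / VK) + (1 - lam) * (fL u * hLs u / VL)) ^ ((n : ℝ) / (n + p)) *
          (lam / (hKs u ^ (n : ℝ) * VKp) + (1 - lam) / (hLs u ^ (n : ℝ) * VLp)) ^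
            (p / ((n : ℝ) + p)) ∂μH[(n : ℝ) - 1])
      ≥ ((∫ u in Metric.sphere (0 : EuclideanSpace ℝ (Fin n)) 1,
            fK u ^ ((n : ℝ) / (n + p)) * hKs u ^ (-(n : ℝ) * (p - 1) / ((n : ℝ) + p))
              ∂μH[(n : ℝ) - 1]) /
          (VK ^ ((n : ℝ) / (n + p)) * VKp ^ (p / ((n : ℝ) + p)))) ^ lam *
        ((∫ u in Metric.sphere (0 : EuclideanSpace ℝ (Fin n)) 1,
            fL u ^ ((n : ℝ) / (n + p)) * hLs u ^ (-(n : ℝ) * (p - 1) / ((n : ℝ) + p))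
              ∂μH[(n : ℝ) - 1]) /
          (VL ^ ((n : ℝ) / (n + p)) * VLp ^ (p / ((n : ℝ) + p)))) ^ (1 - lam) := by
  
  have hn0 : (0:ℝ) < (n:ℝ) := by exact_mod_cast Nat.lt_of_lt_of_le Nat.zero_lt_one hn
  have hnp : (0:ℝ) < (n:ℝ) + p := by positivity
  have hα : (0:ℝ) < (n : ℝ) / (n + p) := by positivity
  have hβ : (0:ℝ) < p / ((n : ℝ) + p) := by positivity
  have hαβ : (n : ℝ) / (n + p) + p / ((n : ℝ) + p) = 1 := by field_simp
  have hl1' : (0:ℝ) < 1 - lam := by linarith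
  have hγ : -(n : ℝ) * (p - 1) / ((n : ℝ) + p) =
      (n : ℝ) / (n + p) - (n : ℝ) * (p / ((n : ℝ) + p)) := by
    field_simp; ring
  have hms : MeasurableSet (Metric.sphere (0 : EuclideanSpace ℝ (Fin n)) 1) :=
    Metric.isClosed_sphere.measurableSet
  have hVK0 : 0 ≤ VK := hVK ▸ ENNReal.toReal_nonneg
  have hVL0 : 0 ≤ VL := hVL ▸ ENNReal.toReal_nonneg
  have hVKp0 : 0 ≤ VKp := hVKp ▸ ENNReal.toReal_nonneg
  have hVLp0 : 0 ≤ VLp := hVLp ▸ ENNReal.toReal_nonneg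
  have hgnn : ∀ u ∈ Metric.sphere (0 : EuclideanSpace ℝ (Fin n)) 1,
      (0:ℝ) ≤ (lam * (fK u * hKs u / VK) + (1 - lam) * (fL u * hLs u / VL)) ^ ((n : ℝ) / (n + p)) *
        (lam / (hKs u ^ (n : ℝ) * VKp) + (1 - lam) / (hLs u ^ (n : ℝ) * VLp)) ^
          (p / ((n : ℝ) + p)) := by
    intro u hu
    obtain ⟨hh1, hf1⟩ := hposK u hu
    obtain ⟨hh2, hf2⟩ := hposL u hu
    positivity
  have hInn : (0:ℝ) ≤ ∫ u in Metric.sphere (0 : EuclideanSpace ℝ (Fin n)) 1,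
      (lam * (fK u * hKs u / VK) + (1 - lam) * (fL u * hLs u / VL)) ^ ((n : ℝ) / (n + p)) *
        (lam / (hKs u ^ (n : ℝ) * VKp) + (1 - lam) / (hLs u ^ (n : ℝ) * VLp)) ^
          (p / ((n : ℝ) + p)) ∂μH[(n : ℝ) - 1] := setIntegral_nonneg hms hgnn
  by_cases hdeg : VK = 0 ∨ VKp = 0 ∨ VL = 0 ∨ VLp = 0
  · rw [ge_iff_le]
    refine le_trans (le_of_eq ?_) hInn
    rcases hdeg with h | h | h | h <;> rw [h] <;>
      simp [Real.zero_rpow, hα.ne', hβ.ne', hlam0.ne', hl1'.ne']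
  · push_neg at hdeg
    obtain ⟨hK1, hKp1, hL1, hLp1⟩ := hdeg
    have hVKpos : 0 < VK := hVK0.lt_of_ne (Ne.symm hK1)
    have hVKppos : 0 < VKp := hVKp0.lt_of_ne (Ne.symm hKp1)
    have hVLpos : 0 < VL := hVL0.lt_of_ne (Ne.symm hL1)
    have hVLppos : 0 < VLp := hVLp0.lt_of_ne (Ne.symm hLp1)
    set cK := VK ^ ((n : ℝ) / (n + p)) * VKp ^ (p / ((n : ℝ) + p)) with hcKdef
    set cL := VL ^ ((n : ℝ) / (n + p)) * VLp ^ (p / ((n : ℝ) + p)) with hcLdef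
    have hcK : 0 < cK := by rw [hcKdef]; positivity
    have hcL : 0 < cL := by rw [hcLdef]; positivity
    set IK := ∫ u in Metric.sphere (0 : EuclideanSpace ℝ (Fin n)) 1,
        fK u ^ ((n : ℝ) / (n + p)) * hKs u ^ (-(n : ℝ) * (p - 1) / ((n : ℝ) + p))
          ∂μH[(n : ℝ) - 1] with hIKdef
    set IL := ∫ u in Metric.sphere (0 : EuclideanSpace ℝ (Fin n)) 1,
        fL u ^ ((n : ℝ) / (n + p)) * hLs u ^ (-(n : ℝ) * (p - 1) / ((n : ℝ) + p))
          ∂μH[(n : ℝ) - 1] with hILdef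
    have hIKnn : 0 ≤ IK := by
      rw [hIKdef]
      refine setIntegral_nonneg hms fun u hu => ?_
      obtain ⟨hh1, hf1⟩ := hposK u hu
      positivity
    have hILnn : 0 ≤ IL := by
      rw [hILdef]
      refine setIntegral_nonneg hms fun u hu => ?_
      obtain ⟨hh2, hf2⟩ := hposL u hu
      positivity
    have hpt : ∀ u ∈ Metric.sphere (0 : EuclideanSpace ℝ (Fin n)) 1,
        lam / cK * (fK u ^ ((n : ℝ) / (n + p)) * hKs u ^ (-(n : ℝ) * (p - 1) / ((n : ℝ) + p))) +
          (1 - lam) / cL *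
            (fL u ^ ((n : ℝ) / (n + p)) * hLs u ^ (-(n : ℝ) * (p - 1) / ((n : ℝ) + p))) ≤
        (lam * (fK u * hKs u / VK) + (1 - lam) * (fL u * hLs u / VL)) ^ ((n : ℝ) / (n + p)) *
          (lam / (hKs u ^ (n : ℝ) * VKp) + (1 - lam) / (hLs u ^ (n : ℝ) * VLp)) ^
            (p / ((n : ℝ) + p)) := by
      intro u hu
      obtain ⟨hh1, hf1⟩ := hposK u hu
      obtain ⟨hh2, hf2⟩ := hposL u hu
      have hb1 : (0:ℝ) < 1 / (hKs u ^ (n : ℝ) * VKp) := by positivity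
      have hb2 : (0:ℝ) < 1 / (hLs u ^ (n : ℝ) * VLp) := by positivity
      have e1 := F_eq hf1 hh1 hVKpos hVKppos hγ
      have e2 := F_eq hf2 hh2 hVLpos hVLppos hγ
      calc lam / cK * (fK u ^ ((n : ℝ) / (n + p)) * hKs u ^ (-(n : ℝ) * (p - 1) / ((n : ℝ) + p))) +
            (1 - lam) / cL *
              (fL u ^ ((n : ℝ) / (n + p)) * hLs u ^ (-(n : ℝ) * (p - 1) / ((n : ℝ) + p)))
          = lam * ((fK u * hKs u / VK) ^ ((n : ℝ) / (n + p)) *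
                (1 / (hKs u ^ (n : ℝ) * VKp)) ^ (p / ((n : ℝ) + p))) +
              (1 - lam) * ((fL u * hLs u / VL) ^ ((n : ℝ) / (n + p)) *
                (1 / (hLs u ^ (n : ℝ) * VLp)) ^ (p / ((n : ℝ) + p))) := by
            rw [e1, e2, hcKdef, hcLdef]; ring
        _ ≤ (lam * (fK u * hKs u / VK) + (1 - lam) * (fL u * hLs u / VL)) ^ ((n : ℝ) / (n + p)) *
              (lam * (1 / (hKs u ^ (n : ℝ) * VKp)) +
                (1 - lam) * (1 / (hLs u ^ (n : ℝ) * VLp))) ^ (p / ((n : ℝ) + p)) :=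
            geom2_concave hα hβ hαβ hlam0 hlam1 (by positivity) (by positivity) hb1 hb2
        _ = (lam * (fK u * hKs u / VK) + (1 - lam) * (fL u * hLs u / VL)) ^ ((n : ℝ) / (n + p)) *
              (lam / (hKs u ^ (n : ℝ) * VKp) + (1 - lam) / (hLs u ^ (n : ℝ) * VLp)) ^
                (p / ((n : ℝ) + p)) := by
            rw [mul_one_div, mul_one_div]
    have hiK : IntegrableOn (fun u =>
        lam / cK * (fK u ^ ((n : ℝ) / (n + p)) * hKs u ^ (-(n : ℝ) * (p - 1) / ((n : ℝ) + p))))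
        (Metric.sphere (0 : EuclideanSpace ℝ (Fin n)) 1) μH[(n : ℝ) - 1] :=
      hintK.const_mul _
    have hiL : IntegrableOn (fun u =>
        (1 - lam) / cL *
          (fL u ^ ((n : ℝ) / (n + p)) * hLs u ^ (-(n : ℝ) * (p - 1) / ((n : ℝ) + p))))
        (Metric.sphere (0 : EuclideanSpace ℝ (Fin n)) 1) μH[(n : ℝ) - 1] :=
      hintL.const_mul _
    have hmono := setIntegral_mono_on (hiK.add hiL) hint hms hpt
    have hsplit : (∫ u in Metric.sphere (0 : EuclideanSpace ℝ (Fin n)) 1,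
        (lam / cK * (fK u ^ ((n : ℝ) / (n + p)) * hKs u ^ (-(n : ℝ) * (p - 1) / ((n : ℝ) + p))) +
          (1 - lam) / cL *
            (fL u ^ ((n : ℝ) / (n + p)) * hLs u ^ (-(n : ℝ) * (p - 1) / ((n : ℝ) + p))))
        ∂μH[(n : ℝ) - 1]) = lam / cK * IK + (1 - lam) / cL * IL := by
      rw [hIKdef, hILdef, integral_add hiK hiL, integral_const_mul, integral_const_mul]
    rw [ge_iff_le]
    calc (IK / cK) ^ lam * (IL / cL) ^ (1 - lam)
        ≤ lam * (IK / cK) + (1 - lam) * (IL / cL) :=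
          Real.geom_mean_le_arith_mean2_weighted hlam0.le hl1'.le (by positivity) (by positivity)
            (by ring)
      _ = lam / cK * IK + (1 - lam) / cL * IL := by ring
      _ = _ := hsplit.symm
      _ ≤ _ := hmono
end
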